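/- arXiv:1304.0157 — 4 statements merged into one kernel-verified Lean document; each statement's English description precedes it below -/
import Mathlib

section
/- Let m < M be real numbers, let A be a self-adjoint operator in B(H) with spectrum contained in [m, M], and let f : [m, M] → ℝ be a continuous convex function. Then f(A) ≤ (f(m)/(M−m))·(M·I − A) + (f(M)/(M−m))·(A − m·I) − δ_f · Ã, where Ã = (1/2)·I − (1/(M−m))·|A − ((m+M)/2)·I|. -/
/-!
For a real number `t ∈ [m, M]` the right-hand side, evaluated at `t` instead of `A`, is the
piecewise linear interpolant of `f` at the nodes `m`, `(m + M) / 2`, `M`; a convex function lies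
below its chords on both halves of `[m, M]`. Every term of the operator right-hand side is the
continuous functional calculus of the corresponding scalar term, so the operator inequality
follows from the monotonicity of `cfc`.
-/

noncomputable def opAbs {H : Type*} [NormedAddCommGroup H] [InnerProductSpace ℂ H]
    [CompleteSpace H] (A : H →L[ℂ] H) : H →L[ℂ] H :=
  cfc (fun t : ℝ => |t|) A

theorem ConvexOn.sub_mul_le_of_mem_Icc {s : Set ℝ} {f : ℝ → ℝ} (hf : ConvexOn ℝ s f) {x y z : ℝ}
    (hx : x ∈ s) (hz : z ∈ s) (hy : y ∈ Set.Icc x z) :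
    (z - x) * f y ≤ (z - y) * f x + (y - x) * f z := by
  obtain ⟨hxy, hyz⟩ := hy
  rcases hxy.eq_or_lt with rfl | hxy
  · linarith
  rcases hyz.eq_or_lt with rfl | hyz
  · linarith
  exact hf.secant_mono_aux1 hx hz hxy hyz

theorem ConvexOn.le_midpoint_interpolant {m M : ℝ} (hmM : m < M) {f : ℝ → ℝ}
    (hf : ConvexOn ℝ (Set.Icc m M) f) {t : ℝ} (ht : t ∈ Set.Icc m M) :
    f t ≤ f m / (M - m) * (M - t) + f M / (M - m) * (t - m)
      - (f m + f M - 2 * f ((m + M) / 2)) * (1 / 2 - (M - m)⁻¹ * |t - (m + M) / 2|) := by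
  have hm : m ∈ Set.Icc m M := Set.left_mem_Icc.2 hmM.le
  have hM : M ∈ Set.Icc m M := Set.right_mem_Icc.2 hmM.le
  have hc : (m + M) / 2 ∈ Set.Icc m M := ⟨by linarith, by linarith⟩
  have hMm : 0 < M - m := sub_pos.2 hmM
  rcases le_total t ((m + M) / 2) with htc | htc
  · have chord := hf.sub_mul_le_of_mem_Icc hm hc ⟨ht.1, htc⟩
    rw [abs_of_nonpos (sub_nonpos.2 htc)]
    field_simp
    linarith
  · have chord := hf.sub_mul_le_of_mem_Icc hc hM ⟨htc, ht.2⟩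
    rw [abs_of_nonneg (sub_nonneg.2 htc)]
    field_simp
    linarith

theorem opAbs_sub_smul_one {H : Type*} [NormedAddCommGroup H] [InnerProductSpace ℂ H]
    [CompleteSpace H] {A : H →L[ℂ] H} (hA : IsSelfAdjoint A) (c : ℝ) :
    opAbs (A - c • 1) = cfc (fun t : ℝ => |t - c|) A := by
  rw [opAbs, cfc_comp' (fun t : ℝ => |t|) (fun t => t - c) A, cfc_sub .., cfc_id' ..,
    cfc_const .., Algebra.algebraMap_eq_smul_one]

/-- If `A` is self-adjoint with spectrum in `[m, M]` and `f` is a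
continuous convex function on `[m, M]`, then
`f(A) ≤ (f(m)/(M−m))·(M·I − A) + (f(M)/(M−m))·(A − m·I) − δ_f · Ã`,
where `Ã = (1/2)·I − (1/(M−m))·|A − ((m+M)/2)·I|` and
`δ_f = f(m) + f(M) − 2 f((m+M)/2)`. -/
theorem jensen_lemma_refined {H : Type*} [NormedAddCommGroup H] [InnerProductSpace ℂ H]
    [CompleteSpace H] (m M : ℝ) (hmM : m < M) (A : H →L[ℂ] H) (hA : IsSelfAdjoint A)
    (hspec : spectrum ℝ A ⊆ Set.Icc m M) (f : ℝ → ℝ)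
    (hf : ContinuousOn f (Set.Icc m M)) (hconv : ConvexOn ℝ (Set.Icc m M) f) :
    cfc f A ≤
      (f m / (M - m)) • (M • (1 : H →L[ℂ] H) - A) + (f M / (M - m)) • (A - m • 1) -
        (f m + f M - 2 * f ((m + M) / 2)) •
          ((1 / 2 : ℝ) • (1 : H →L[ℂ] H) -
            (M - m)⁻¹ • opAbs (A - ((m + M) / 2) • 1)) := by
  calc cfc f A ≤ cfc (fun t => f m / (M - m) * (M - t) + f M / (M - m) * (t - m)
      - (f m + f M - 2 * f ((m + M) / 2)) * (1 / 2 - (M - m)⁻¹ * |t - (m + M) / 2|)) A :=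
        cfc_mono (fun t ht => hconv.le_midpoint_interpolant hmM (hspec ht)) (hf.mono hspec)
    _ = _ := by
      rw [opAbs_sub_smul_one hA, cfc_sub .., cfc_add .., cfc_const_mul .., cfc_const_mul ..,
        cfc_const_mul .., cfc_sub .., cfc_sub .., cfc_sub .., cfc_const_mul .., cfc_const ..,
        cfc_const .., cfc_const .., cfc_id' ..]
      simp only [Algebra.algebraMap_eq_smul_one]
end

section
/- Let α, β, γ, δ > 0 be real numbers and let Φ_1,…,Φ_{n₁}, Φ̄_1,…,Φ̄_{n₂}, Ψ_1,…,Ψ_{n₃}, Ψ̄_1,…,Ψ̄_{n₄} be positive linear maps on B(H) with Σ_{i=1}^{n₁} Φ_i(I) = α·I, Σ_{i=1}^{n₂} Φ̄_i(I) = δ·I, Σ_{i=1}^{n₃} Ψ_i(I) = γ·I and Σ_{i=1}^{n₄} Ψ̄_i(I) = β·I. Let m < M be real numbers, let J be an interval containing [m, M], and let A_i (i = 1,…,n₁), D_i (i = 1,…,n₂), C_i (i = 1,…,n₃), B_i (i = 1,…,n₄) be operators in σ(J) with A_i ≤ m·I, m·I ≤ B_i ≤ M·I, m·I ≤ C_i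 ≤ M·I and M·I ≤ D_i. Assume (1/α)·Σ_i Φ_i(A_i) + (1/δ)·Σ_i Φ̄_i(D_i) = (1/γ)·Σ_i Ψ_i(C_i) + (1/β)·Σ_i Ψ̄_i(B_i). Then for every continuous convex function f : J → ℝ, (1/γ)·Σ_i Ψ_i(f(C_i)) + (1/β)·Σ_i Ψ̄_i(f(B_i)) ≤ f((1/α)·Σ_i Φ_i(A_i)) + f((1/δ)·Σ_i Φ̄_i(D_i)) − δ_f · X̃₂ ≤ f((1/α)·Σ_i Φ_i(A_i)) + f((1/δ)·Σ_i Φ̄_i(D_i)), where X̃₂ = I − (1/(M−m))·[ (1/γ)·Σ_i Ψ_i(|C_i − ((m+M)/2)·I|) + (1/β)·Σ_i Ψ̄_i(|B_i − ((m+M)/2)·I|) ]. -/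
/-!
Let `ℓ t = f m + slope f m M * (t - m)` be the chord of `f` over `[m, M]`. With the tent function
`τ t = 1/2 - |t - (m + M)/2| / (M - m)`, the chord inequality of the convex function `f` on each
half of `[m, M]` gives `f t + δ_f * τ t ≤ ℓ t` for `t ∈ [m, M]`, while `ℓ t ≤ f t` for
`t ∈ J \ (m, M)`. The functional calculus turns both into operator inequalities. Averaging the
first over the `C i` and the `B i` with the unital positive maps, and applying the second to the
average `X` of the `A i` (spectrum `≤ m`) and the average `Y` of the `D i` (spectrum `≥ M`), the
two chains meet because `ℓ` is affine and `X + Y` equals the sum of the other two averages.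
The second inequality holds since `δ_f ≥ 0` and `X̃₂` is an average of values of `τ`, which
is nonnegative on `[m, M]`.
-/

namespace ConvexOn

variable {𝕜 : Type*} [Field 𝕜] [LinearOrder 𝕜] [IsStrictOrderedRing 𝕜] {s : Set 𝕜} {f : 𝕜 → 𝕜}
  {x y t : 𝕜}

theorem le_chord (hf : ConvexOn 𝕜 s f) (hx : x ∈ s) (hy : y ∈ s) (ht : t ∈ Set.Icc x y) :
    f t ≤ f x + slope f x y * (t - x) := by
  rcases ht.1.eq_or_lt with rfl | hxt
  · simp
  have hts : t ∈ s := hf.1.ordConnected.out hx hy ⟨hxt.le, ht.2⟩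
  have hslope : slope f x t ≤ slope f x y :=
    hf.slope_mono hx ⟨hts, hxt.ne'⟩ ⟨hy, (hxt.trans_le ht.2).ne'⟩ ht.2
  have := mul_le_mul_of_nonneg_left hslope (sub_nonneg.2 hxt.le)
  have chord_eq := sub_smul_slope f x t
  rw [smul_eq_mul, vsub_eq_sub] at chord_eq
  linarith

theorem chord_le (hf : ConvexOn 𝕜 s f) (hx : x ∈ s) (hy : y ∈ s) (hxy : x < y) (hts : t ∈ s)
    (ht : t ∉ Set.Ioo x y) : f x + slope f x y * (t - x) ≤ f t := by
  have chord_eq := sub_smul_slope f x t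
  rw [smul_eq_mul, vsub_eq_sub] at chord_eq
  rcases lt_trichotomy t x with htx | rfl | hxt
  · have hslope : slope f x t ≤ slope f x y :=
      hf.slope_mono hx ⟨hts, htx.ne⟩ ⟨hy, hxy.ne'⟩ (htx.trans hxy).le
    have := mul_le_mul_of_nonpos_left hslope (sub_nonpos.2 htx.le)
    linarith [chord_eq]
  · simp
  · have hyt : y ≤ t := not_lt.1 fun hty => ht ⟨hxt, hty⟩
    have hslope : slope f x y ≤ slope f x t :=
      hf.slope_mono hx ⟨hy, hxy.ne'⟩ ⟨hts, hxt.ne'⟩ hyt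
    have := mul_le_mul_of_nonneg_left hslope (sub_nonneg.2 hxt.le)
    linarith [chord_eq]

theorem add_mul_tent_le_chord (hf : ConvexOn 𝕜 s f) {m M : 𝕜} (hmM : m < M)
    (hs : Set.Icc m M ⊆ s) (ht : t ∈ Set.Icc m M) :
    f t + (f m + f M - 2 * f ((m + M) / 2)) * (1 / 2 - (M - m)⁻¹ * |t - (m + M) / 2|) ≤
      f m + slope f m M * (t - m) := by
  have hMm : M - m ≠ 0 := (sub_pos.2 hmM).ne'
  have hm : m ∈ s := hs ⟨le_rfl, hmM.le⟩
  have hM : M ∈ s := hs ⟨hmM.le, le_rfl⟩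
  have hμ : (m + M) / 2 ∈ s := hs ⟨by linarith, by linarith⟩
  have half_sub_eq : (m + M) / 2 - m = (M - m) / 2 := by ring
  have sub_half_eq : M - (m + M) / 2 = (M - m) / 2 := by ring
  rcases le_total t ((m + M) / 2) with htμ | htμ
  · rw [abs_of_nonpos (sub_nonpos.2 htμ)]
    calc _ ≤ f m + slope f m ((m + M) / 2) * (t - m) +
          (f m + f M - 2 * f ((m + M) / 2)) * (1 / 2 - (M - m)⁻¹ * -(t - (m + M) / 2)) :=
          add_le_add_left (hf.le_chord hm hμ ⟨ht.1, htμ⟩) _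
      _ = _ := by
          rw [slope_def_field, slope_def_field, half_sub_eq]
          field_simp
          ring
  · rw [abs_of_nonneg (sub_nonneg.2 htμ)]
    calc _ ≤ f ((m + M) / 2) + slope f ((m + M) / 2) M * (t - (m + M) / 2) +
          (f m + f M - 2 * f ((m + M) / 2)) * (1 / 2 - (M - m)⁻¹ * (t - (m + M) / 2)) :=
          add_le_add_left (hf.le_chord hμ hM ⟨htμ, ht.2⟩) _
      _ = _ := by
          rw [slope_def_field, slope_def_field, sub_half_eq]
          field_simp
          ring

theorem two_mul_map_midpoint_le (hf : ConvexOn 𝕜 s f) (hx : x ∈ s) (hy : y ∈ s) :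
    2 * f ((x + y) / 2) ≤ f x + f y := by
  have := hf.2 hx hy (by norm_num : (0 : 𝕜) ≤ 1 / 2) (by norm_num : (0 : 𝕜) ≤ 1 / 2) (by norm_num)
  rw [smul_eq_mul, smul_eq_mul, smul_eq_mul, smul_eq_mul, ← mul_add, ← mul_add,
    one_div_mul_eq_div] at this
  linarith

end ConvexOn

section CFC

variable {A : Type*} [CStarAlgebra A] {a : A}

lemma cfc_const_add_mul_sub (c k r : ℝ) (ha : IsSelfAdjoint a) :
    cfc (fun t => c + k * (t - r)) a = c • 1 + k • (a - r • 1) := by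
  rw [cfc_const_add c _ a, cfc_const_mul k _ a, cfc_sub (fun t => t) (fun _ => r) a,
    cfc_id' ℝ a, cfc_const r a, Algebra.algebraMap_eq_smul_one, Algebra.algebraMap_eq_smul_one]

lemma cfc_abs_sub_const (μ : ℝ) (ha : IsSelfAdjoint a) :
    cfc (fun t => |t - μ|) a = cfc (fun t : ℝ => |t|) (a - μ • 1) := by
  rw [cfc_comp' (fun t : ℝ => |t|) (fun t => t - μ) a, cfc_sub (fun t => t) (fun _ => μ) a,
    cfc_id' ℝ a, cfc_const μ a, Algebra.algebraMap_eq_smul_one]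

lemma cfc_half_sub_mul_abs_sub (k μ : ℝ) (ha : IsSelfAdjoint a) :
    cfc (fun t => 1 / 2 - k * |t - μ|) a =
      (1 / 2 : ℝ) • 1 - k • cfc (fun t : ℝ => |t|) (a - μ • 1) := by
  rw [cfc_sub (fun _ => 1 / 2) (fun t => k * |t - μ|) a, cfc_const _ a,
    cfc_const_mul k _ a, cfc_abs_sub_const μ ha, Algebra.algebraMap_eq_smul_one]

end CFC

section Order

variable {A : Type*} [CStarAlgebra A] [PartialOrder A] [StarOrderedRing A] {a : A} {r : ℝ}

lemma isSelfAdjoint_of_le_smul_one (h : a ≤ r • 1) : IsSelfAdjoint a := by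
  simpa using ((IsSelfAdjoint.all r).smul (.one A)).sub (sub_nonneg.2 h).isSelfAdjoint

lemma isSelfAdjoint_of_smul_one_le (h : r • 1 ≤ a) : IsSelfAdjoint a := by
  simpa using (sub_nonneg.2 h).isSelfAdjoint.add ((IsSelfAdjoint.all r).smul (.one A))

lemma le_smul_one_iff_spectrum_le (ha : IsSelfAdjoint a) :
    a ≤ r • 1 ↔ ∀ t ∈ spectrum ℝ a, t ≤ r := by
  rw [← Algebra.algebraMap_eq_smul_one, le_algebraMap_iff_spectrum_le]

lemma smul_one_le_iff_le_spectrum (ha : IsSelfAdjoint a) :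
    r • 1 ≤ a ↔ ∀ t ∈ spectrum ℝ a, r ≤ t := by
  rw [← Algebra.algebraMap_eq_smul_one, algebraMap_le_iff_le_spectrum]

lemma spectrum_subset_Icc {s : ℝ} (h₁ : r • 1 ≤ a) (h₂ : a ≤ s • 1) :
    spectrum ℝ a ⊆ Set.Icc r s := fun t ht =>
  ⟨(smul_one_le_iff_le_spectrum (isSelfAdjoint_of_le_smul_one h₂)).1 h₁ t ht,
    (le_smul_one_iff_spectrum_le (isSelfAdjoint_of_le_smul_one h₂)).1 h₂ t ht⟩

lemma IsSelfAdjoint.exists_mem_spectrum_smul_one_le [Nontrivial A] (ha : IsSelfAdjoint a) :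
    ∃ r ∈ spectrum ℝ a, r • 1 ≤ a := by
  obtain ⟨r, hr, hle⟩ := (spectrum.isCompact (𝕜 := ℝ) a).exists_isLeast
    (ContinuousFunctionalCalculus.spectrum_nonempty a ha)
  exact ⟨r, hr, (smul_one_le_iff_le_spectrum ha).2 hle⟩

lemma IsSelfAdjoint.exists_mem_spectrum_le_smul_one [Nontrivial A] (ha : IsSelfAdjoint a) :
    ∃ r ∈ spectrum ℝ a, a ≤ r • 1 := by
  obtain ⟨r, hr, hle⟩ := (spectrum.isCompact (𝕜 := ℝ) a).exists_isGreatest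
    (ContinuousFunctionalCalculus.spectrum_nonempty a ha)
  exact ⟨r, hr, (le_smul_one_iff_spectrum_le ha).2 hle⟩

variable {f : ℝ → ℝ} {J : Set ℝ} {m M : ℝ}

lemma cfc_add_smul_tent_le_chord (hconv : ConvexOn ℝ J f) (hf : ContinuousOn f J) (hmM : m < M)
    (hJ : Set.Icc m M ⊆ J) (hm : m • 1 ≤ a) (hM : a ≤ M • 1) :
    cfc f a + (f m + f M - 2 * f ((m + M) / 2)) •
        ((1 / 2 : ℝ) • 1 - (M - m)⁻¹ • cfc (fun t : ℝ => |t|) (a - ((m + M) / 2) • 1)) ≤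
      f m • 1 + slope f m M • (a - m • 1) := by
  have ha := isSelfAdjoint_of_le_smul_one hM
  have hspec := spectrum_subset_Icc hm hM
  have hfa : ContinuousOn f (spectrum ℝ a) := hf.mono (hspec.trans hJ)
  have key := cfc_mono (a := a) (fun t ht => hconv.add_mul_tent_le_chord hmM hJ (hspec ht))
    (hf := hfa.add (by fun_prop)) (hg := by fun_prop)
  rwa [cfc_add a f _ hfa, cfc_const_mul _ _ a, cfc_half_sub_mul_abs_sub _ _ ha,
    cfc_const_add_mul_sub _ _ _ ha] at key

lemma chord_le_cfc (hconv : ConvexOn ℝ J f) (hf : ContinuousOn f J) (hmM : m < M) (hmJ : m ∈ J)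
    (hMJ : M ∈ J) (hspec : spectrum ℝ a ⊆ J) (hout : a ≤ m • 1 ∨ M • 1 ≤ a) :
    f m • 1 + slope f m M • (a - m • 1) ≤ cfc f a := by
  have ha : IsSelfAdjoint a := hout.elim isSelfAdjoint_of_le_smul_one isSelfAdjoint_of_smul_one_le
  rw [← cfc_const_add_mul_sub _ _ _ ha]
  refine cfc_mono (fun t ht => hconv.chord_le hmJ hMJ hmM (hspec ht) fun hmt => ?_)
    (hf := by fun_prop) (hg := hf.mono hspec)
  rcases hout with h | h
  · exact hmt.1.not_ge ((le_smul_one_iff_spectrum_le ha).1 h t ht)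
  · exact hmt.2.not_ge ((smul_one_le_iff_le_spectrum ha).1 h t ht)

lemma cfc_abs_sub_midpoint_le (hm : m • 1 ≤ a) (hM : a ≤ M • 1) :
    cfc (fun t : ℝ => |t|) (a - ((m + M) / 2) • 1) ≤ ((M - m) / 2) • 1 := by
  have ha := isSelfAdjoint_of_le_smul_one hM
  rw [← cfc_abs_sub_const _ ha, ← Algebra.algebraMap_eq_smul_one, ← cfc_const _ a ha]
  refine cfc_mono fun t ht => ?_
  obtain ⟨hmt, htM⟩ := spectrum_subset_Icc hm hM ht
  exact abs_le.2 ⟨by linarith, by linarith⟩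

end Order

section Average

variable {ι A B : Type*} [Fintype ι] [CStarAlgebra A] [CStarAlgebra B] {Φ : ι → A →ₗ[ℂ] B}
  {α : ℝ}

lemma inv_smul_sum_map_smul_one (hα : α ≠ 0) (hΦ1 : ∑ i, Φ i 1 = α • 1) (c : ℝ) :
    α⁻¹ • ∑ i, Φ i (c • 1) = c • 1 := by
  simp_rw [LinearMap.map_smul_of_tower, ← Finset.smul_sum, hΦ1, smul_comm c, inv_smul_smul₀ hα]

lemma nonempty_of_sum_map_one_eq_smul [Nontrivial B] (hα : α ≠ 0) (hΦ1 : ∑ i, Φ i 1 = α • 1) :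
    Nonempty ι := by
  by_contra hι
  rw [not_nonempty_iff] at hι
  simp only [Finset.univ_eq_empty, Finset.sum_empty] at hΦ1
  exact one_ne_zero ((smul_eq_zero.1 hΦ1.symm).resolve_left hα)

variable [PartialOrder A] [StarOrderedRing A] [PartialOrder B] [StarOrderedRing B]

lemma inv_smul_sum_map_mono (hα : 0 < α) (hΦ : ∀ i, ∀ T, 0 ≤ T → 0 ≤ Φ i T) {S T : ι → A}
    (h : ∀ i, S i ≤ T i) : α⁻¹ • ∑ i, Φ i (S i) ≤ α⁻¹ • ∑ i, Φ i (T i) := by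
  refine smul_le_smul_of_nonneg_left (Finset.sum_le_sum fun i _ => ?_) (inv_nonneg.2 hα.le)
  simpa using hΦ i _ (sub_nonneg.2 (h i))

lemma inv_smul_sum_map_le_smul_one (hα : 0 < α) (hΦ : ∀ i, ∀ T, 0 ≤ T → 0 ≤ Φ i T)
    (hΦ1 : ∑ i, Φ i 1 = α • 1) {T : ι → A} {c : ℝ} (h : ∀ i, T i ≤ c • 1) :
    α⁻¹ • ∑ i, Φ i (T i) ≤ c • 1 :=
  inv_smul_sum_map_smul_one hα.ne' hΦ1 c ▸ inv_smul_sum_map_mono hα hΦ h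

lemma smul_one_le_inv_smul_sum_map (hα : 0 < α) (hΦ : ∀ i, ∀ T, 0 ≤ T → 0 ≤ Φ i T)
    (hΦ1 : ∑ i, Φ i 1 = α • 1) {T : ι → A} {c : ℝ} (h : ∀ i, c • 1 ≤ T i) :
    c • 1 ≤ α⁻¹ • ∑ i, Φ i (T i) :=
  inv_smul_sum_map_smul_one hα.ne' hΦ1 c ▸ inv_smul_sum_map_mono hα hΦ h

lemma spectrum_inv_smul_sum_map_subset [Nontrivial A] [Nontrivial B] (hα : 0 < α)
    (hΦ : ∀ i, ∀ T, 0 ≤ T → 0 ≤ Φ i T) (hΦ1 : ∑ i, Φ i 1 = α • 1) {T : ι → A}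
    (hT : ∀ i, IsSelfAdjoint (T i)) {J : Set ℝ} (hJ : J.OrdConnected)
    (hTJ : ∀ i, spectrum ℝ (T i) ⊆ J) : spectrum ℝ (α⁻¹ • ∑ i, Φ i (T i)) ⊆ J := by
  have := nonempty_of_sum_map_one_eq_smul hα.ne' hΦ1
  choose r hr hrT using fun i => (hT i).exists_mem_spectrum_smul_one_le
  choose s hs hsT using fun i => (hT i).exists_mem_spectrum_le_smul_one
  obtain ⟨i₀, hi₀⟩ := Finite.exists_min r
  obtain ⟨i₁, hi₁⟩ := Finite.exists_max s
  have hlo := smul_one_le_inv_smul_sum_map hα hΦ hΦ1 fun i =>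
    (smul_le_smul_of_nonneg_right (hi₀ i) zero_le_one).trans (hrT i)
  have hhi := inv_smul_sum_map_le_smul_one hα hΦ hΦ1 fun i =>
    (hsT i).trans (smul_le_smul_of_nonneg_right (hi₁ i) zero_le_one)
  exact (spectrum_subset_Icc hlo hhi).trans (hJ.out (hTJ i₀ (hr i₀)) (hTJ i₁ (hs i₁)))

variable {f : ℝ → ℝ} {J : Set ℝ} {m M : ℝ}

lemma inv_smul_sum_map_cfc_add_smul_tent_le_chord (hα : 0 < α)
    (hΦ : ∀ i, ∀ T, 0 ≤ T → 0 ≤ Φ i T) (hΦ1 : ∑ i, Φ i 1 = α • 1)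
    (hconv : ConvexOn ℝ J f) (hf : ContinuousOn f J) (hmM : m < M) (hJ : Set.Icc m M ⊆ J)
    {T : ι → A} (hm : ∀ i, m • 1 ≤ T i) (hM : ∀ i, T i ≤ M • 1) :
    α⁻¹ • ∑ i, Φ i (cfc f (T i)) + (f m + f M - 2 * f ((m + M) / 2)) •
        ((1 / 2 : ℝ) • 1 - (M - m)⁻¹ •
          α⁻¹ • ∑ i, Φ i (cfc (fun t : ℝ => |t|) (T i - ((m + M) / 2) • 1))) ≤
      f m • 1 + slope f m M • (α⁻¹ • ∑ i, Φ i (T i) - m • 1) := by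
  have hα' := hα.ne'
  have key := inv_smul_sum_map_mono hα hΦ fun i =>
    cfc_add_smul_tent_le_chord hconv hf hmM hJ (hm i) (hM i)
  simp only [map_add, map_sub, LinearMap.map_smul_of_tower, Finset.sum_add_distrib,
    Finset.sum_sub_distrib, ← Finset.smul_sum, hΦ1] at key
  convert key using 1 <;> match_scalars <;> field_simp

lemma half_smul_one_sub_inv_smul_sum_map_abs_nonneg (hα : 0 < α)
    (hΦ : ∀ i, ∀ T, 0 ≤ T → 0 ≤ Φ i T) (hΦ1 : ∑ i, Φ i 1 = α • 1) (hmM : m < M) {T : ι → A}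
    (hm : ∀ i, m • 1 ≤ T i) (hM : ∀ i, T i ≤ M • 1) :
    0 ≤ (1 / 2 : ℝ) • (1 : B) - (M - m)⁻¹ •
      α⁻¹ • ∑ i, Φ i (cfc (fun t : ℝ => |t|) (T i - ((m + M) / 2) • 1)) := by
  have h := inv_smul_sum_map_le_smul_one hα hΦ hΦ1 fun i => cfc_abs_sub_midpoint_le (hm i) (hM i)
  have hMm : 0 < M - m := sub_pos.2 hmM
  rw [sub_nonneg]
  calc _ ≤ (M - m)⁻¹ • ((M - m) / 2) • (1 : B) :=
        smul_le_smul_of_nonneg_left h (inv_nonneg.2 hMm.le)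
    _ = (1 / 2 : ℝ) • 1 := by rw [smul_smul]; field_simp

end Average

theorem jensen_type_variant_one_general {H : Type*} [NormedAddCommGroup H] [InnerProductSpace ℂ H]
    [CompleteSpace H] {n₁ n₂ n₃ n₄ : ℕ} (α β γ δ : ℝ)
    (hα : 0 < α) (hβ : 0 < β) (hγ : 0 < γ) (hδ : 0 < δ)
    (Φ : Fin n₁ → (H →L[ℂ] H) →ₗ[ℂ] (H →L[ℂ] H))
    (Φb : Fin n₂ → (H →L[ℂ] H) →ₗ[ℂ] (H →L[ℂ] H))
    (Ψ : Fin n₃ → (H →L[ℂ] H) →ₗ[ℂ] (H →L[ℂ] H))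
    (Ψb : Fin n₄ → (H →L[ℂ] H) →ₗ[ℂ] (H →L[ℂ] H))
    (hΦpos : ∀ i, ∀ T : H →L[ℂ] H, 0 ≤ T → 0 ≤ Φ i T)
    (hΦbpos : ∀ i, ∀ T : H →L[ℂ] H, 0 ≤ T → 0 ≤ Φb i T)
    (hΨpos : ∀ i, ∀ T : H →L[ℂ] H, 0 ≤ T → 0 ≤ Ψ i T)
    (hΨbpos : ∀ i, ∀ T : H →L[ℂ] H, 0 ≤ T → 0 ≤ Ψb i T)
    (hΦ1 : ∑ i, Φ i 1 = α • (1 : H →L[ℂ] H))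
    (hΦb1 : ∑ i, Φb i 1 = δ • (1 : H →L[ℂ] H))
    (hΨ1 : ∑ i, Ψ i 1 = γ • (1 : H →L[ℂ] H))
    (hΨb1 : ∑ i, Ψb i 1 = β • (1 : H →L[ℂ] H))
    (m M : ℝ) (hmM : m < M) (J : Set ℝ) (hJmM : Set.Icc m M ⊆ J)
    (A : Fin n₁ → H →L[ℂ] H) (D : Fin n₂ → H →L[ℂ] H)
    (C : Fin n₃ → H →L[ℂ] H) (B : Fin n₄ → H →L[ℂ] H)
    (hAspec : ∀ i, spectrum ℝ (A i) ⊆ J)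
    (hDspec : ∀ i, spectrum ℝ (D i) ⊆ J)
    (hA : ∀ i, A i ≤ m • 1) (hD : ∀ i, M • 1 ≤ D i)
    (hBl : ∀ i, m • 1 ≤ B i) (hBu : ∀ i, B i ≤ M • 1)
    (hCl : ∀ i, m • 1 ≤ C i) (hCu : ∀ i, C i ≤ M • 1)
    (hsum : α⁻¹ • ∑ i, Φ i (A i) + δ⁻¹ • ∑ i, Φb i (D i) =
      γ⁻¹ • ∑ i, Ψ i (C i) + β⁻¹ • ∑ i, Ψb i (B i))
    (f : ℝ → ℝ) (hf : ContinuousOn f J) (hconv : ConvexOn ℝ J f) :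
    γ⁻¹ • ∑ i, Ψ i (cfc f (C i)) + β⁻¹ • ∑ i, Ψb i (cfc f (B i)) ≤
        cfc f (α⁻¹ • ∑ i, Φ i (A i)) + cfc f (δ⁻¹ • ∑ i, Φb i (D i)) -
          (f m + f M - 2 * f ((m + M) / 2)) •
            ((1 : H →L[ℂ] H) -
              (M - m)⁻¹ •
                (γ⁻¹ • ∑ i, Ψ i (opAbs (C i - ((m + M) / 2) • 1)) +
                  β⁻¹ • ∑ i, Ψb i (opAbs (B i - ((m + M) / 2) • 1)))) ∧
      cfc f (α⁻¹ • ∑ i, Φ i (A i)) + cfc f (δ⁻¹ • ∑ i, Φb i (D i)) -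
          (f m + f M - 2 * f ((m + M) / 2)) •
            ((1 : H →L[ℂ] H) -
              (M - m)⁻¹ •
                (γ⁻¹ • ∑ i, Ψ i (opAbs (C i - ((m + M) / 2) • 1)) +
                  β⁻¹ • ∑ i, Ψb i (opAbs (B i - ((m + M) / 2) • 1)))) ≤
        cfc f (α⁻¹ • ∑ i, Φ i (A i)) + cfc f (δ⁻¹ • ∑ i, Φb i (D i)) := by
  rcases subsingleton_or_nontrivial H with hH | hH
  · exact ⟨(Subsingleton.elim _ _).le, (Subsingleton.elim _ _).le⟩
  have hmJ : m ∈ J := hJmM ⟨le_rfl, hmM.le⟩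
  have hMJ : M ∈ J := hJmM ⟨hmM.le, le_rfl⟩
  have hX := chord_le_cfc hconv hf hmM hmJ hMJ
    (spectrum_inv_smul_sum_map_subset hα hΦpos hΦ1 (fun i => isSelfAdjoint_of_le_smul_one (hA i))
      hconv.1.ordConnected hAspec) (.inl (inv_smul_sum_map_le_smul_one hα hΦpos hΦ1 hA))
  have hY := chord_le_cfc hconv hf hmM hmJ hMJ
    (spectrum_inv_smul_sum_map_subset hδ hΦbpos hΦb1
      (fun i => isSelfAdjoint_of_smul_one_le (hD i)) hconv.1.ordConnected hDspec)
    (.inr (smul_one_le_inv_smul_sum_map hδ hΦbpos hΦb1 hD))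
  have hC := inv_smul_sum_map_cfc_add_smul_tent_le_chord hγ hΨpos hΨ1 hconv hf hmM hJmM hCl hCu
  have hB := inv_smul_sum_map_cfc_add_smul_tent_le_chord hβ hΨbpos hΨb1 hconv hf hmM hJmM hBl hBu
  have hCn := half_smul_one_sub_inv_smul_sum_map_abs_nonneg hγ hΨpos hΨ1 hmM hCl hCu
  have hBn := half_smul_one_sub_inv_smul_sum_map_abs_nonneg hβ hΨbpos hΨb1 hmM hBl hBu
  have hδf := hconv.two_mul_map_midpoint_le hmJ hMJ
  simp only [opAbs]
  constructor
  · rw [← sub_nonneg]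
    convert add_nonneg (add_nonneg (sub_nonneg.2 hX) (sub_nonneg.2 hY))
      (add_nonneg (sub_nonneg.2 hC) (sub_nonneg.2 hB)) using 1
    linear_combination (norm := module) slope f m M • hsum
  · refine sub_le_self _ (smul_nonneg (sub_nonneg.2 hδf) ?_)
    convert add_nonneg hCn hBn using 1
    module

/-- Remark after Theorem 2.2, variant (1). -/
theorem jensen_type_variant_one {H : Type*} [NormedAddCommGroup H] [InnerProductSpace ℂ H]
    [CompleteSpace H] {n₁ n₂ n₃ n₄ : ℕ} (α β γ δ : ℝ)
    (hα : 0 < α) (hβ : 0 < β) (hγ : 0 < γ) (hδ : 0 < δ)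
    (Φ : Fin n₁ → (H →L[ℂ] H) →ₗ[ℂ] (H →L[ℂ] H))
    (Φb : Fin n₂ → (H →L[ℂ] H) →ₗ[ℂ] (H →L[ℂ] H))
    (Ψ : Fin n₃ → (H →L[ℂ] H) →ₗ[ℂ] (H →L[ℂ] H))
    (Ψb : Fin n₄ → (H →L[ℂ] H) →ₗ[ℂ] (H →L[ℂ] H))
    (hΦpos : ∀ i, ∀ T : H →L[ℂ] H, 0 ≤ T → 0 ≤ Φ i T)
    (hΦbpos : ∀ i, ∀ T : H →L[ℂ] H, 0 ≤ T → 0 ≤ Φb i T)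
    (hΨpos : ∀ i, ∀ T : H →L[ℂ] H, 0 ≤ T → 0 ≤ Ψ i T)
    (hΨbpos : ∀ i, ∀ T : H →L[ℂ] H, 0 ≤ T → 0 ≤ Ψb i T)
    (hΦ1 : ∑ i, Φ i 1 = α • (1 : H →L[ℂ] H))
    (hΦb1 : ∑ i, Φb i 1 = δ • (1 : H →L[ℂ] H))
    (hΨ1 : ∑ i, Ψ i 1 = γ • (1 : H →L[ℂ] H))
    (hΨb1 : ∑ i, Ψb i 1 = β • (1 : H →L[ℂ] H))
    (m M : ℝ) (hmM : m < M) (J : Set ℝ) (hJ : J.OrdConnected) (hJmM : Set.Icc m M ⊆ J)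
    (A : Fin n₁ → H →L[ℂ] H) (D : Fin n₂ → H →L[ℂ] H)
    (C : Fin n₃ → H →L[ℂ] H) (B : Fin n₄ → H →L[ℂ] H)
    (hAsa : ∀ i, IsSelfAdjoint (A i)) (hAspec : ∀ i, spectrum ℝ (A i) ⊆ J)
    (hDsa : ∀ i, IsSelfAdjoint (D i)) (hDspec : ∀ i, spectrum ℝ (D i) ⊆ J)
    (hCsa : ∀ i, IsSelfAdjoint (C i)) (hCspec : ∀ i, spectrum ℝ (C i) ⊆ J)
    (hBsa : ∀ i, IsSelfAdjoint (B i)) (hBspec : ∀ i, spectrum ℝ (B i) ⊆ J)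
    (hA : ∀ i, A i ≤ m • 1) (hD : ∀ i, M • 1 ≤ D i)
    (hBl : ∀ i, m • 1 ≤ B i) (hBu : ∀ i, B i ≤ M • 1)
    (hCl : ∀ i, m • 1 ≤ C i) (hCu : ∀ i, C i ≤ M • 1)
    (hsum : α⁻¹ • ∑ i, Φ i (A i) + δ⁻¹ • ∑ i, Φb i (D i) =
      γ⁻¹ • ∑ i, Ψ i (C i) + β⁻¹ • ∑ i, Ψb i (B i))
    (f : ℝ → ℝ) (hf : ContinuousOn f J) (hconv : ConvexOn ℝ J f) :
    γ⁻¹ • ∑ i, Ψ i (cfc f (C i)) + β⁻¹ • ∑ i, Ψb i (cfc f (B i)) ≤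
        cfc f (α⁻¹ • ∑ i, Φ i (A i)) + cfc f (δ⁻¹ • ∑ i, Φb i (D i)) -
          (f m + f M - 2 * f ((m + M) / 2)) •
            ((1 : H →L[ℂ] H) -
              (M - m)⁻¹ •
                (γ⁻¹ • ∑ i, Ψ i (opAbs (C i - ((m + M) / 2) • 1)) +
                  β⁻¹ • ∑ i, Ψb i (opAbs (B i - ((m + M) / 2) • 1)))) ∧
      cfc f (α⁻¹ • ∑ i, Φ i (A i)) + cfc f (δ⁻¹ • ∑ i, Φb i (D i)) -
          (f m + f M - 2 * f ((m + M) / 2)) •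
            ((1 : H →L[ℂ] H) -
              (M - m)⁻¹ •
                (γ⁻¹ • ∑ i, Ψ i (opAbs (C i - ((m + M) / 2) • 1)) +
                  β⁻¹ • ∑ i, Ψb i (opAbs (B i - ((m + M) / 2) • 1)))) ≤
        cfc f (α⁻¹ • ∑ i, Φ i (A i)) + cfc f (δ⁻¹ • ∑ i, Φb i (D i)) :=
  jensen_type_variant_one_general α β γ δ hα hβ hγ hδ Φ Φb Ψ Ψb hΦpos hΦbpos hΨpos hΨbpos hΦ1 hΦb1
    hΨ1 hΨb1 m M hmM J hJmM A D C B hAspec hDspec hA hD hBl hBu hCl hCu hsum f hf hconv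
end

section
/- Let m < M be real numbers, let J be an interval containing [m, M], and let f : J → ℝ be a continuous convex function. Let A_i, B_i, C_i, D_i ∈ σ(J) (i = 1,…,n) satisfy A_i + D_i = B_i + C_i, A_i ≤ m·I, m·I ≤ B_i ≤ M·I, m·I ≤ C_i ≤ M·I and M·I ≤ D_i for each i, and let Φ_1,…,Φ_n be positive linear maps on B(H) with Σ_{i=1}^n Φ_i(I) = I. Then Σ_i Φ_i(f(B_i)) + Σ_i Φ_i(f(C_i)) ≤ f(Σ_i Φ_i(A_i)) + f(Σ_i Φ_i(D_i)) − δ_f · X̃₂ ≤ f(Σ_i Φ_i(A_i)) + f(Σ_i Φ_i(D_i)), where X̃₂ = I − (1/(M−m))·[ Σ_i Φ_i(|B_i − ((m+M)/2)·I|) + Σ_i Φ_i(|C_i − ((m+M)/2)·I|) ]. -/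
open Set

namespace ConvexOn

variable {J : Set ℝ} {f : ℝ → ℝ} {a b x : ℝ}

theorem le_slope_mul_sub_add (hf : ConvexOn ℝ J f) (ha : a ∈ J) (hb : b ∈ J) (hab : a < b)
    (hx : x ∈ Icc a b) : f x ≤ slope f a b * (x - a) + f a := by
  obtain ⟨hax, hxb⟩ := hx
  have hba : 0 < b - a := sub_pos.2 hab
  have hba' : b - a ≠ 0 := hba.ne'
  have key := hf.2 ha hb (div_nonneg (sub_nonneg.2 hxb) hba.le)
    (div_nonneg (sub_nonneg.2 hax) hba.le) (by field_simp; ring)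
  simp only [smul_eq_mul] at key
  rw [show (b - x) / (b - a) * a + (x - a) / (b - a) * b = x by field_simp; ring] at key
  rw [slope_def_field]
  calc f x ≤ _ := key
    _ = _ := by field_simp; ring

theorem slope_mul_sub_add_le (hf : ConvexOn ℝ J f) (ha : a ∈ J) (hb : b ∈ J) (hab : a < b)
    (hx : x ∈ J \ Ioo a b) : slope f a b * (x - a) + f a ≤ f x := by
  obtain ⟨hxJ, hx⟩ := hx
  rcases lt_trichotomy x a with hxa | rfl | hax
  · have h := hf.slope_mono ha ⟨hxJ, hxa.ne⟩ ⟨hb, hab.ne'⟩ (hxa.trans hab).le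
    rw [slope_def_field, div_le_iff_of_neg (sub_neg.2 hxa)] at h
    linarith
  · simp
  · have hbx : b ≤ x := not_lt.1 fun hxb => hx ⟨hax, hxb⟩
    have h := hf.slope_mono ha ⟨hb, hab.ne'⟩ ⟨hxJ, hax.ne'⟩ hbx
    rw [slope_def_field f a x, le_div_iff₀ (sub_pos.2 hax)] at h
    linarith

theorem two_mul_midpoint_le (hf : ConvexOn ℝ J f) (ha : a ∈ J) (hb : b ∈ J) (hab : a < b) :
    2 * f ((a + b) / 2) ≤ f a + f b := by
  have h := hf.le_slope_mul_sub_add ha hb hab (x := (a + b) / 2) ⟨by linarith, by linarith⟩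
  have hba : b - a ≠ 0 := (sub_pos.2 hab).ne'
  rw [slope_def_field, show (f b - f a) / (b - a) * ((a + b) / 2 - a) = (f b - f a) / 2 by
    field_simp; ring] at h
  linarith

/-- On each half of `[a, b]` the right-hand side is the chord of `f` through the midpoint. -/
theorem le_slope_mul_sub_add_sub_tent (hf : ConvexOn ℝ (Icc a b) f) (hab : a < b)
    (hx : x ∈ Icc a b) :
    f x ≤ slope f a b * (x - a) + f a -
      (f a + f b - 2 * f ((a + b) / 2)) * (2⁻¹ - (b - a)⁻¹ * |x - (a + b) / 2|) := by
  have hba : b - a ≠ 0 := (sub_pos.2 hab).ne'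
  have hc : (a + b) / 2 ∈ Icc a b := ⟨by linarith, by linarith⟩
  have ha : a ∈ Icc a b := left_mem_Icc.2 hab.le
  have hb : b ∈ Icc a b := right_mem_Icc.2 hab.le
  rcases le_total x ((a + b) / 2) with hxc | hcx
  · have h := hf.le_slope_mul_sub_add ha hc (by linarith) ⟨hx.1, hxc⟩
    rw [abs_of_nonpos (by linarith)]
    rw [slope_def_field, show (a + b) / 2 - a = (b - a) / 2 by ring] at h
    rw [slope_def_field]
    generalize f ((a + b) / 2) = r at h ⊢
    calc f x ≤ _ := h
      _ = _ := by field_simp; ring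
  · have h := hf.le_slope_mul_sub_add hc hb (by linarith) ⟨hcx, hx.2⟩
    rw [abs_of_nonneg (by linarith)]
    rw [slope_def_field, show b - (a + b) / 2 = (b - a) / 2 by ring] at h
    rw [slope_def_field]
    generalize f ((a + b) / 2) = r at h ⊢
    calc f x ≤ _ := h
      _ = _ := by field_simp; ring

end ConvexOn

section CStarAlgebra

variable {𝒜 ℬ ι : Type*} [CStarAlgebra 𝒜] [CStarAlgebra ℬ] [Fintype ι] {Φ : ι → 𝒜 →ₗ[ℂ] ℬ}

theorem cfc_abs_sub_smul_one {T : 𝒜} (hT : IsSelfAdjoint T) (c : ℝ) :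
    cfc (fun t : ℝ => |t|) (T - c • 1) = cfc (fun x => |x - c|) T := by
  have h : T - c • 1 = cfc (fun x : ℝ => x - c) T := by
    rw [cfc_sub (fun x : ℝ => x) (fun _ => c) T, cfc_id' ℝ T, cfc_const c T,
      Algebra.algebraMap_eq_smul_one]
  rw [h, ← cfc_comp' (fun t : ℝ => |t|) (fun x : ℝ => x - c) T]

theorem sum_map_smul_one (hΦ1 : ∑ i, Φ i 1 = 1) (r : ℝ) : ∑ i, Φ i (r • 1) = r • 1 := by
  simp only [LinearMap.map_smul_of_tower, ← Finset.smul_sum, hΦ1]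

variable [PartialOrder 𝒜] [StarOrderedRing 𝒜] [PartialOrder ℬ] [StarOrderedRing ℬ]

theorem IsSelfAdjoint.of_smul_one_le {a : ℝ} {T : 𝒜} (h : a • (1 : 𝒜) ≤ T) : IsSelfAdjoint T := by
  simpa using (IsSelfAdjoint.of_nonneg (sub_nonneg.2 h)).add
    ((IsSelfAdjoint.all a).smul (IsSelfAdjoint.one 𝒜))

theorem spectrum_subset_Icc_of_smul_one_le {a b : ℝ} {T : 𝒜} (hT : IsSelfAdjoint T)
    (ha : a • 1 ≤ T) (hb : T ≤ b • 1) : spectrum ℝ T ⊆ Icc a b := by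
  rw [← Algebra.algebraMap_eq_smul_one] at ha hb
  exact fun x hx => ⟨(algebraMap_le_iff_le_spectrum hT).1 ha x hx,
    (le_algebraMap_iff_spectrum_le hT).1 hb x hx⟩

theorem exists_mem_forall_smul_one_le {κ : Type*} [Finite κ] {J : Set ℝ} (hJ : J.Nonempty)
    {T : κ → 𝒜} (hT : ∀ i, IsSelfAdjoint (T i)) (hTJ : ∀ i, spectrum ℝ (T i) ⊆ J) :
    ∃ t ∈ J, ∀ i, t • (1 : 𝒜) ≤ T i := by
  obtain ⟨j, hj⟩ := hJ
  have hK : IsCompact (insert j (⋃ i, spectrum ℝ (T i))) :=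
    (isCompact_iUnion fun i => spectrum.isCompact (T i)).insert j
  refine ⟨sInf _, insert_subset hj (iUnion_subset hTJ) (hK.sInf_mem (insert_nonempty _ _)),
    fun i => ?_⟩
  rw [← Algebra.algebraMap_eq_smul_one, algebraMap_le_iff_le_spectrum (hT i)]
  exact fun x hx => csInf_le hK.bddBelow (mem_insert_of_mem _ (mem_iUnion_of_mem i hx))

theorem exists_mem_forall_le_smul_one {κ : Type*} [Finite κ] {J : Set ℝ} (hJ : J.Nonempty)
    {T : κ → 𝒜} (hT : ∀ i, IsSelfAdjoint (T i)) (hTJ : ∀ i, spectrum ℝ (T i) ⊆ J) :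
    ∃ s ∈ J, ∀ i, T i ≤ s • (1 : 𝒜) := by
  obtain ⟨j, hj⟩ := hJ
  have hK : IsCompact (insert j (⋃ i, spectrum ℝ (T i))) :=
    (isCompact_iUnion fun i => spectrum.isCompact (T i)).insert j
  refine ⟨sSup _, insert_subset hj (iUnion_subset hTJ) (hK.sSup_mem (insert_nonempty _ _)),
    fun i => ?_⟩
  rw [← Algebra.algebraMap_eq_smul_one, le_algebraMap_iff_spectrum_le (hT i)]
  exact fun x hx => le_csSup hK.bddAbove (mem_insert_of_mem _ (mem_iUnion_of_mem i hx))

theorem cfc_abs_sub_smul_one_le {m M : ℝ} {T : 𝒜} (hT : IsSelfAdjoint T)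
    (hσ : spectrum ℝ T ⊆ Icc m M) :
    cfc (fun t : ℝ => |t|) (T - ((m + M) / 2) • 1) ≤ ((M - m) / 2) • 1 := by
  rw [cfc_abs_sub_smul_one hT, ← Algebra.algebraMap_eq_smul_one, cfc_le_algebraMap_iff _ _ _]
  intro x hx
  obtain ⟨hmx, hxM⟩ := hσ hx
  rw [abs_le]
  constructor <;> linarith

theorem cfc_le_slope_smul_sub_add_sub {f : ℝ → ℝ} {m M : ℝ} (hmM : m < M)
    (hconv : ConvexOn ℝ (Icc m M) f) (hf : ContinuousOn f (Icc m M)) {T : 𝒜}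
    (hT : IsSelfAdjoint T) (hσ : spectrum ℝ T ⊆ Icc m M) :
    cfc f T ≤ slope f m M • (T - m • 1) + f m • 1 - (f m + f M - 2 * f ((m + M) / 2)) •
      ((2⁻¹ : ℝ) • 1 - (M - m)⁻¹ • cfc (fun t : ℝ => |t|) (T - ((m + M) / 2) • 1)) := by
  calc cfc f T ≤ cfc (fun x => slope f m M * (x - m) + f m - (f m + f M - 2 * f ((m + M) / 2)) *
        (2⁻¹ - (M - m)⁻¹ * |x - (m + M) / 2|)) T :=
        cfc_mono (fun x hx => hconv.le_slope_mul_sub_add_sub_tent hmM (hσ hx)) (hf.mono hσ)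
    _ = _ := by
        rw [cfc_abs_sub_smul_one hT,
          cfc_sub (fun x => slope f m M * (x - m) + f m)
            (fun x => (f m + f M - 2 * f ((m + M) / 2)) * (2⁻¹ - (M - m)⁻¹ * |x - (m + M) / 2|)) T,
          cfc_add T (fun x => slope f m M * (x - m)) (fun _ => f m),
          cfc_const_mul _ (fun x => x - m) T, cfc_const_mul _ (fun x => 2⁻¹ - (M - m)⁻¹ * |x - (m + M) / 2|) T,
          cfc_sub (fun _ => 2⁻¹) (fun x => (M - m)⁻¹ * |x - (m + M) / 2|) T,
          cfc_const_mul _ (fun x => |x - (m + M) / 2|) T, cfc_sub (fun x => x) (fun _ => m) T,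
          cfc_id' ℝ T, cfc_const m T, cfc_const (f m) T, cfc_const 2⁻¹ T]
        simp only [Algebra.algebraMap_eq_smul_one]

theorem slope_smul_sub_add_le_cfc {f : ℝ → ℝ} {J : Set ℝ} {m M : ℝ} (hmM : m < M) (hm : m ∈ J)
    (hM : M ∈ J) (hconv : ConvexOn ℝ J f) (hf : ContinuousOn f J) {T : 𝒜}
    (hT : IsSelfAdjoint T) (hσ : spectrum ℝ T ⊆ J \ Ioo m M) :
    slope f m M • (T - m • 1) + f m • 1 ≤ cfc f T := by
  calc _ = cfc (fun x => slope f m M * (x - m) + f m) T := by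
        rw [cfc_add T (fun x => slope f m M * (x - m)) (fun _ => f m),
          cfc_const_mul _ (fun x => x - m) T, cfc_sub (fun x => x) (fun _ => m) T,
          cfc_id' ℝ T, cfc_const m T, cfc_const (f m) T]
        simp only [Algebra.algebraMap_eq_smul_one]
    _ ≤ cfc f T := cfc_mono (fun x hx => hconv.slope_mul_sub_add_le hm hM hmM (hσ hx))
        (hg := hf.mono (hσ.trans sdiff_subset))

theorem sum_map_le_sum_map (hΦ : ∀ i T, 0 ≤ T → 0 ≤ Φ i T) {S T : ι → 𝒜} (h : ∀ i, S i ≤ T i) :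
    ∑ i, Φ i (S i) ≤ ∑ i, Φ i (T i) :=
  Finset.sum_le_sum fun i _ => sub_nonneg.1 <| by
    simpa only [map_sub] using hΦ i _ (sub_nonneg.2 (h i))

theorem smul_one_le_sum_map (hΦ : ∀ i T, 0 ≤ T → 0 ≤ Φ i T) (hΦ1 : ∑ i, Φ i 1 = 1) {r : ℝ}
    {T : ι → 𝒜} (h : ∀ i, r • 1 ≤ T i) : r • 1 ≤ ∑ i, Φ i (T i) :=
  sum_map_smul_one hΦ1 r ▸ sum_map_le_sum_map hΦ h

theorem sum_map_le_smul_one (hΦ : ∀ i T, 0 ≤ T → 0 ≤ Φ i T) (hΦ1 : ∑ i, Φ i 1 = 1) {r : ℝ}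
    {T : ι → 𝒜} (h : ∀ i, T i ≤ r • 1) : ∑ i, Φ i (T i) ≤ r • 1 :=
  sum_map_smul_one hΦ1 r ▸ sum_map_le_sum_map hΦ h

theorem spectrum_sum_map_subset_Icc (hΦ : ∀ i T, 0 ≤ T → 0 ≤ Φ i T) (hΦ1 : ∑ i, Φ i 1 = 1)
    {a b : ℝ} {T : ι → 𝒜} (ha : ∀ i, a • 1 ≤ T i) (hb : ∀ i, T i ≤ b • 1) :
    spectrum ℝ (∑ i, Φ i (T i)) ⊆ Icc a b :=
  have ha' := smul_one_le_sum_map hΦ hΦ1 ha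
  spectrum_subset_Icc_of_smul_one_le (.of_smul_one_le ha') ha' (sum_map_le_smul_one hΦ hΦ1 hb)

theorem sum_map_cfc_le (hΦ : ∀ i T, 0 ≤ T → 0 ≤ Φ i T) (hΦ1 : ∑ i, Φ i 1 = 1) {f : ℝ → ℝ}
    {m M : ℝ} (hmM : m < M) (hconv : ConvexOn ℝ (Icc m M) f) (hf : ContinuousOn f (Icc m M))
    {T : ι → 𝒜} (hT : ∀ i, IsSelfAdjoint (T i)) (hσ : ∀ i, spectrum ℝ (T i) ⊆ Icc m M) :
    ∑ i, Φ i (cfc f (T i)) ≤ slope f m M • (∑ i, Φ i (T i) - m • 1) + f m • 1 -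
      (f m + f M - 2 * f ((m + M) / 2)) • ((2⁻¹ : ℝ) • 1 - (M - m)⁻¹ •
        ∑ i, Φ i (cfc (fun t : ℝ => |t|) (T i - ((m + M) / 2) • 1))) := by
  calc _ ≤ ∑ i, Φ i (slope f m M • (T i - m • 1) + f m • 1 -
        (f m + f M - 2 * f ((m + M) / 2)) • ((2⁻¹ : ℝ) • 1 - (M - m)⁻¹ •
          cfc (fun t : ℝ => |t|) (T i - ((m + M) / 2) • 1))) :=
        sum_map_le_sum_map hΦ fun i => cfc_le_slope_smul_sub_add_sub hmM hconv hf (hT i) (hσ i)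
    _ = _ := by
        simp only [map_add, map_sub, LinearMap.map_smul_of_tower, Finset.sum_add_distrib,
          Finset.sum_sub_distrib, ← Finset.smul_sum, hΦ1]

end CStarAlgebra

theorem jensen_type_maps_two_general {H : Type*} [NormedAddCommGroup H] [InnerProductSpace ℂ H]
    [CompleteSpace H] {n : ℕ} (m M : ℝ) (hmM : m < M) (J : Set ℝ) (hJ : J.OrdConnected)
    (hJmM : Set.Icc m M ⊆ J) (f : ℝ → ℝ) (hf : ContinuousOn f J) (hconv : ConvexOn ℝ J f)
    (A B C D : Fin n → H →L[ℂ] H)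
    (hAsa : ∀ i, IsSelfAdjoint (A i)) (hAspec : ∀ i, spectrum ℝ (A i) ⊆ J)
    (hBsa : ∀ i, IsSelfAdjoint (B i))
    (hCsa : ∀ i, IsSelfAdjoint (C i))
    (hDsa : ∀ i, IsSelfAdjoint (D i)) (hDspec : ∀ i, spectrum ℝ (D i) ⊆ J)
    (hADBC : ∀ i, A i + D i = B i + C i)
    (hA : ∀ i, A i ≤ m • 1) (hBl : ∀ i, m • 1 ≤ B i) (hBu : ∀ i, B i ≤ M • 1)
    (hCl : ∀ i, m • 1 ≤ C i) (hCu : ∀ i, C i ≤ M • 1) (hD : ∀ i, M • 1 ≤ D i)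
    (Φ : Fin n → (H →L[ℂ] H) →ₗ[ℂ] (H →L[ℂ] H))
    (hΦpos : ∀ i, ∀ T : H →L[ℂ] H, 0 ≤ T → 0 ≤ Φ i T)
    (hΦ1 : ∑ i, Φ i 1 = (1 : H →L[ℂ] H)) :
    ∑ i, Φ i (cfc f (B i)) + ∑ i, Φ i (cfc f (C i)) ≤
        cfc f (∑ i, Φ i (A i)) + cfc f (∑ i, Φ i (D i)) -
          (f m + f M - 2 * f ((m + M) / 2)) •
            ((1 : H →L[ℂ] H) -
              (M - m)⁻¹ •
                (∑ i, Φ i (opAbs (B i - ((m + M) / 2) • 1)) +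
                  ∑ i, Φ i (opAbs (C i - ((m + M) / 2) • 1)))) ∧
      cfc f (∑ i, Φ i (A i)) + cfc f (∑ i, Φ i (D i)) -
          (f m + f M - 2 * f ((m + M) / 2)) •
            ((1 : H →L[ℂ] H) -
              (M - m)⁻¹ •
                (∑ i, Φ i (opAbs (B i - ((m + M) / 2) • 1)) +
                  ∑ i, Φ i (opAbs (C i - ((m + M) / 2) • 1)))) ≤
        cfc f (∑ i, Φ i (A i)) + cfc f (∑ i, Φ i (D i)) := by
  have hmJ : m ∈ J := hJmM (left_mem_Icc.2 hmM.le)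
  have hMJ : M ∈ J := hJmM (right_mem_Icc.2 hmM.le)
  have hBσ i := spectrum_subset_Icc_of_smul_one_le (hBsa i) (hBl i) (hBu i)
  have hCσ i := spectrum_subset_Icc_of_smul_one_le (hCsa i) (hCl i) (hCu i)
  obtain ⟨t, htJ, htA⟩ := exists_mem_forall_smul_one_le ⟨m, hmJ⟩ hAsa hAspec
  obtain ⟨s, hsJ, hDs⟩ := exists_mem_forall_le_smul_one ⟨M, hMJ⟩ hDsa hDspec
  have hσA : spectrum ℝ (∑ i, Φ i (A i)) ⊆ J \ Ioo m M := fun x hx =>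
    have hx := spectrum_sum_map_subset_Icc hΦpos hΦ1 htA hA hx
    ⟨hJ.out htJ hmJ hx, fun h => h.1.not_ge hx.2⟩
  have hσD : spectrum ℝ (∑ i, Φ i (D i)) ⊆ J \ Ioo m M := fun x hx =>
    have hx := spectrum_sum_map_subset_Icc hΦpos hΦ1 hD hDs hx
    ⟨hJ.out hMJ hsJ hx, fun h => h.2.not_ge hx.1⟩
  have hsum : ∑ i, Φ i (B i) + ∑ i, Φ i (C i) = ∑ i, Φ i (A i) + ∑ i, Φ i (D i) := by
    simp only [← Finset.sum_add_distrib, ← map_add, hADBC]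
  have hconvI := hconv.subset hJmM (convex_Icc m M)
  set σ := slope f m M
  set δ := f m + f M - 2 * f ((m + M) / 2)
  set P := ∑ i, Φ i (opAbs (B i - ((m + M) / 2) • 1))
  set Q := ∑ i, Φ i (opAbs (C i - ((m + M) / 2) • 1))
  have hX : (0 : H →L[ℂ] H) ≤ 1 - (M - m)⁻¹ • (P + Q) := by
    have hP : P ≤ ((M - m) / 2) • 1 :=
      sum_map_le_smul_one hΦpos hΦ1 fun i => cfc_abs_sub_smul_one_le (hBsa i) (hBσ i)
    have hQ : Q ≤ ((M - m) / 2) • 1 :=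
      sum_map_le_smul_one hΦpos hΦ1 fun i => cfc_abs_sub_smul_one_le (hCsa i) (hCσ i)
    have h := smul_le_smul_of_nonneg_left (add_le_add hP hQ) (inv_nonneg.2 (sub_nonneg.2 hmM.le))
    rwa [← add_smul, add_halves, inv_smul_smul₀ (sub_pos.2 hmM).ne', ← sub_nonneg] at h
  refine ⟨?_, sub_le_self _ (smul_nonneg (by linarith [hconv.two_mul_midpoint_le hmJ hMJ hmM]) hX)⟩
  calc _ ≤ (σ • (∑ i, Φ i (B i) - m • 1) + f m • 1 - δ • ((2⁻¹ : ℝ) • 1 - (M - m)⁻¹ • P)) +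
        (σ • (∑ i, Φ i (C i) - m • 1) + f m • 1 - δ • ((2⁻¹ : ℝ) • 1 - (M - m)⁻¹ • Q)) :=
        add_le_add (sum_map_cfc_le hΦpos hΦ1 hmM hconvI (hf.mono hJmM) hBsa hBσ)
          (sum_map_cfc_le hΦpos hΦ1 hmM hconvI (hf.mono hJmM) hCsa hCσ)
    _ = (σ • (∑ i, Φ i (A i) - m • 1) + f m • 1) + (σ • (∑ i, Φ i (D i) - m • 1) + f m • 1) -
        δ • (1 - (M - m)⁻¹ • (P + Q)) := by
        linear_combination (norm := module) σ • hsum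
    _ ≤ _ := by
        gcongr
        · exact slope_smul_sub_add_le_cfc hmM hmJ hMJ hconv hf
            (.of_smul_one_le (smul_one_le_sum_map hΦpos hΦ1 htA)) hσA
        · exact slope_smul_sub_add_le_cfc hmM hmJ hMJ hconv hf
            (.of_smul_one_le (smul_one_le_sum_map hΦpos hΦ1 hD)) hσD

/-- **Corollary 2.5 (2) of the paper.** -/
theorem jensen_type_maps_two {H : Type*} [NormedAddCommGroup H] [InnerProductSpace ℂ H]
    [CompleteSpace H] {n : ℕ} (m M : ℝ) (hmM : m < M) (J : Set ℝ) (hJ : J.OrdConnected)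
    (hJmM : Set.Icc m M ⊆ J) (f : ℝ → ℝ) (hf : ContinuousOn f J) (hconv : ConvexOn ℝ J f)
    (A B C D : Fin n → H →L[ℂ] H)
    (hAsa : ∀ i, IsSelfAdjoint (A i)) (hAspec : ∀ i, spectrum ℝ (A i) ⊆ J)
    (hBsa : ∀ i, IsSelfAdjoint (B i)) (hBspec : ∀ i, spectrum ℝ (B i) ⊆ J)
    (hCsa : ∀ i, IsSelfAdjoint (C i)) (hCspec : ∀ i, spectrum ℝ (C i) ⊆ J)
    (hDsa : ∀ i, IsSelfAdjoint (D i)) (hDspec : ∀ i, spectrum ℝ (D i) ⊆ J)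
    (hADBC : ∀ i, A i + D i = B i + C i)
    (hA : ∀ i, A i ≤ m • 1) (hBl : ∀ i, m • 1 ≤ B i) (hBu : ∀ i, B i ≤ M • 1)
    (hCl : ∀ i, m • 1 ≤ C i) (hCu : ∀ i, C i ≤ M • 1) (hD : ∀ i, M • 1 ≤ D i)
    (Φ : Fin n → (H →L[ℂ] H) →ₗ[ℂ] (H →L[ℂ] H))
    (hΦpos : ∀ i, ∀ T : H →L[ℂ] H, 0 ≤ T → 0 ≤ Φ i T)
    (hΦ1 : ∑ i, Φ i 1 = (1 : H →L[ℂ] H)) :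
    ∑ i, Φ i (cfc f (B i)) + ∑ i, Φ i (cfc f (C i)) ≤
        cfc f (∑ i, Φ i (A i)) + cfc f (∑ i, Φ i (D i)) -
          (f m + f M - 2 * f ((m + M) / 2)) •
            ((1 : H →L[ℂ] H) -
              (M - m)⁻¹ •
                (∑ i, Φ i (opAbs (B i - ((m + M) / 2) • 1)) +
                  ∑ i, Φ i (opAbs (C i - ((m + M) / 2) • 1)))) ∧
      cfc f (∑ i, Φ i (A i)) + cfc f (∑ i, Φ i (D i)) -
          (f m + f M - 2 * f ((m + M) / 2)) •
            ((1 : H →L[ℂ] H) -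
              (M - m)⁻¹ •
                (∑ i, Φ i (opAbs (B i - ((m + M) / 2) • 1)) +
                  ∑ i, Φ i (opAbs (C i - ((m + M) / 2) • 1)))) ≤
        cfc f (∑ i, Φ i (A i)) + cfc f (∑ i, Φ i (D i)) :=
  jensen_type_maps_two_general m M hmM J hJ hJmM f hf hconv A B C D hAsa hAspec hBsa hCsa hDsa
    hDspec hADBC hA hBl hBu hCl hCu hD Φ hΦpos hΦ1
end

section
/- Let m < M be real numbers, let J be an interval containing [m, M], and let f : J → ℝ be a continuous convex function. Let A_i, B_i, C_i, D_i ∈ σ(J) (i = 1,…,n) satisfy A_i ≤ m·I, m·I ≤ B_i ≤ M·I, m·I ≤ C_i ≤ M·I and M·I ≤ D_i for each i, and suppose Σ_{i=1}^n (A_i + D_i) = Σ_{i=1}^n (C_i + B_i). Then Σ_i f(C_i) + Σ_i f(B_i) ≤ Σ_i f(A_i) + Σ_i f(D_i) − δ_f · Σ_i (C̃_i + B̃_i) ≤ Σ_i f(A_i) + Σ_i f(D_i), where C̃_i = (1/2)·I − (1/(M−m))·|C_i − ((m+M)/2)·I| and B̃_i = (1/2)·I − (1/(M−m))·|B_i −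 ((m+M)/2)·I|. -/
set_option maxHeartbeats 1000000
set_option synthInstance.maxHeartbeats 200000


section Aux

variable {m M : ℝ} {J : Set ℝ} {f : ℝ → ℝ}

/-- midpoint convexity gives `0 ≤ δ_f` -/
private lemma delta_nonneg (hmM : m < M) (hJmM : Set.Icc m M ⊆ J)
    (hconv : ConvexOn ℝ J f) : 0 ≤ f m + f M - 2 * f ((m + M) / 2) := by
  have hm : m ∈ J := hJmM ⟨le_rfl, hmM.le⟩
  have hM : M ∈ J := hJmM ⟨hmM.le, le_rfl⟩
  have h := hconv.2 hm hM (by norm_num : (0:ℝ) ≤ 1/2) (by norm_num : (0:ℝ) ≤ 1/2)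
    (by norm_num)
  simp only [smul_eq_mul] at h
  have harg : (1/2 : ℝ) * m + (1/2 : ℝ) * M = (m + M) / 2 := by ring
  rw [harg] at h
  linarith

/-- the key scalar inequality on `[m, M]` -/
private lemma key_mid (hmM : m < M) (hJmM : Set.Icc m M ⊆ J) (hconv : ConvexOn ℝ J f)
    {t : ℝ} (ht : t ∈ Set.Icc m M) :
    f t + (f m + f M - 2 * f ((m + M) / 2)) *
        ((1/2 : ℝ) - (M - m)⁻¹ * |t - (m + M) / 2|) ≤
      (f M - f m) / (M - m) * t + (f m - (f M - f m) / (M - m) * m) := by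
  obtain ⟨htm, htM⟩ := ht
  have hmm : (0:ℝ) < M - m := by linarith
  have hm : m ∈ J := hJmM ⟨le_rfl, hmM.le⟩
  have hM : M ∈ J := hJmM ⟨hmM.le, le_rfl⟩
  have hc : (m + M) / 2 ∈ J := hJmM ⟨by linarith, by linarith⟩
  have hα : (f M - f m) / (M - m) * t + (f m - (f M - f m) / (M - m) * m) =
      (t - m) / (M - m) * (f M - f m) + f m := by field_simp; ring
  rw [hα]
  rcases le_total t ((m + M) / 2) with h | h
  · set s : ℝ := (t - m) / (M - m) with hs_def
    have hs0 : 0 ≤ s := div_nonneg (by linarith) hmm.le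
    have hs1 : 2 * s ≤ 1 := by
      rw [show (2:ℝ) * s = (2 * (t - m)) / (M - m) by rw [hs_def]; ring,
        div_le_one hmm]
      linarith
    have hcv := hconv.2 hm hc (by linarith : (0:ℝ) ≤ 1 - 2 * s) (by linarith : (0:ℝ) ≤ 2 * s)
      (by ring)
    simp only [smul_eq_mul] at hcv
    have harg : (1 - 2 * s) * m + 2 * s * ((m + M) / 2) = t := by
      rw [hs_def]; field_simp; ring
    rw [harg] at hcv
    have habs : |t - (m + M) / 2| = (m + M) / 2 - t := by
      rw [abs_of_nonpos (by linarith)]; ring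
    have hg : (1/2 : ℝ) - (M - m)⁻¹ * ((m + M) / 2 - t) = s := by
      rw [hs_def]; field_simp; ring
    rw [habs, hg]
    nlinarith [hcv]
  · set s : ℝ := (M - t) / (M - m) with hs_def
    have hs0 : 0 ≤ s := div_nonneg (by linarith) hmm.le
    have hs1 : 2 * s ≤ 1 := by
      rw [show (2:ℝ) * s = (2 * (M - t)) / (M - m) by rw [hs_def]; ring,
        div_le_one hmm]
      linarith
    have hcv := hconv.2 hM hc (by linarith : (0:ℝ) ≤ 1 - 2 * s) (by linarith : (0:ℝ) ≤ 2 * s)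
      (by ring)
    simp only [smul_eq_mul] at hcv
    have harg : (1 - 2 * s) * M + 2 * s * ((m + M) / 2) = t := by
      rw [hs_def]; field_simp; ring
    rw [harg] at hcv
    have habs : |t - (m + M) / 2| = t - (m + M) / 2 := abs_of_nonneg (by linarith)
    have hg : (1/2 : ℝ) - (M - m)⁻¹ * (t - (m + M) / 2) = s := by
      rw [hs_def]; field_simp; ring
    have ht' : (t - m) / (M - m) = 1 - s := by rw [hs_def]; field_simp; try ring
    rw [habs, hg, ht']
    nlinarith [hcv]

private lemma key_left (hmM : m < M) (hJmM : Set.Icc m M ⊆ J) (hconv : ConvexOn ℝ J f)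
    {t : ℝ} (htJ : t ∈ J) (ht : t ≤ m) :
    (f M - f m) / (M - m) * t + (f m - (f M - f m) / (M - m) * m) ≤ f t := by
  have hmm : (0:ℝ) < M - m := by linarith
  rcases eq_or_lt_of_le ht with rfl | ht'
  · have h0 : (f M - f t) / (M - t) * t + (f t - (f M - f t) / (M - t) * t) = f t := by ring
    linarith [h0.le]
  · have hM : M ∈ J := hJmM ⟨hmM.le, le_rfl⟩
    have hm : m ∈ J := hJmM ⟨le_rfl, hmM.le⟩
    have hs := hconv.slope_mono_adjacent htJ hM ht' (by linarith : m < M)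
    rw [div_le_div_iff₀ (by linarith) hmm] at hs
    have hexp : (f M - f m) / (M - m) * t + (f m - (f M - f m) / (M - m) * m) =
        (f M - f m) / (M - m) * (t - m) + f m := by ring
    rw [hexp]
    have h2 : (f M - f m) / (M - m) * (t - m) = ((f M - f m) * (t - m)) / (M - m) := by ring
    rw [h2, div_add' _ _ _ hmm.ne', div_le_iff₀ hmm]
    nlinarith [hs]

private lemma key_right (hmM : m < M) (hJmM : Set.Icc m M ⊆ J) (hconv : ConvexOn ℝ J f)
    {t : ℝ} (htJ : t ∈ J) (ht : M ≤ t) :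
    (f M - f m) / (M - m) * t + (f m - (f M - f m) / (M - m) * m) ≤ f t := by
  have hmm : (0:ℝ) < M - m := by linarith
  have hexp : (f M - f m) / (M - m) * t + (f m - (f M - f m) / (M - m) * m) =
      (f M - f m) / (M - m) * (t - m) + f m := by ring
  rw [hexp]
  rcases eq_or_lt_of_le ht with rfl | ht'
  · have h0 : (f M - f m) / (M - m) * (M - m) = f M - f m := div_mul_cancel₀ _ (by linarith)
    linarith
  · have hM : M ∈ J := hJmM ⟨hmM.le, le_rfl⟩
    have hm : m ∈ J := hJmM ⟨le_rfl, hmM.le⟩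
    have hs := hconv.slope_mono_adjacent hm htJ hmM ht'
    rw [div_le_div_iff₀ hmm (by linarith)] at hs
    have h2 : (f M - f m) / (M - m) * (t - m) = ((f M - f m) * (t - m)) / (M - m) := by ring
    rw [h2, div_add' _ _ _ hmm.ne', div_le_iff₀ hmm]
    nlinarith [hs]

private lemma g_nonneg (hmM : m < M) {t : ℝ} (ht : t ∈ Set.Icc m M) :
    0 ≤ (1/2 : ℝ) - (M - m)⁻¹ * |t - (m + M) / 2| := by
  obtain ⟨htm, htM⟩ := ht
  have hmm : (0:ℝ) < M - m := by linarith
  have habs : |t - (m + M) / 2| ≤ (M - m) / 2 :=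
    abs_le.mpr ⟨by linarith, by linarith⟩
  have h1 : (M - m)⁻¹ * |t - (m + M) / 2| ≤ (M - m)⁻¹ * ((M - m) / 2) :=
    mul_le_mul_of_nonneg_left habs (inv_nonneg.mpr hmm.le)
  have h2 : (M - m)⁻¹ * ((M - m) / 2) = 1/2 := by field_simp
  linarith

end Aux

section OpAux

variable {H : Type*} [NormedAddCommGroup H] [InnerProductSpace ℂ H] [CompleteSpace H]

private lemma cfc_affine (a : H →L[ℂ] H) (ha : IsSelfAdjoint a) (α β : ℝ) :
    cfc (fun t : ℝ => α * t + β) a = α • a + β • 1 := by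
  rw [cfc_add_const β (fun t => α * t) a (by fun_prop) ha, cfc_const_mul_id α a ha,
    Algebra.algebraMap_eq_smul_one]

private lemma opAbs_sub_smul (a : H →L[ℂ] H) (ha : IsSelfAdjoint a) (c : ℝ) :
    opAbs (a - c • 1) = cfc (fun t : ℝ => |t - c|) a := by
  have h1 : cfc (fun t : ℝ => t - c) a = a - c • 1 := by
    have h2 := cfc_add_const (-c) id a (by fun_prop) ha
    rw [cfc_id ℝ a ha] at h2
    simpa [sub_eq_add_neg, Algebra.algebraMap_eq_smul_one] using h2
  rw [opAbs, ← h1,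
    ← cfc_comp' (fun t : ℝ => |t|) (fun t : ℝ => t - c) a (by fun_prop) (by fun_prop) ha]

private lemma bracket_eq (a : H →L[ℂ] H) (ha : IsSelfAdjoint a) (c d : ℝ) :
    (1/2 : ℝ) • (1 : H →L[ℂ] H) - d • opAbs (a - c • 1) =
      cfc (fun t : ℝ => (1/2 : ℝ) - d * |t - c|) a := by
  rw [opAbs_sub_smul a ha c,
    cfc_sub (fun _ : ℝ => (1/2 : ℝ)) (fun t : ℝ => d * |t - c|) a (by fun_prop) (by fun_prop),
    cfc_const (1/2 : ℝ) a ha, cfc_const_mul d (fun t : ℝ => |t - c|) a (by fun_prop),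
    Algebra.algebraMap_eq_smul_one]

end OpAux

/-- Corollary 2.7, inequality (2.10) of the paper. -/
theorem jensen_type_termwise {H : Type*} [NormedAddCommGroup H] [InnerProductSpace ℂ H]
    [CompleteSpace H] {n : ℕ} (m M : ℝ) (hmM : m < M) (J : Set ℝ) (hJ : J.OrdConnected)
    (hJmM : Set.Icc m M ⊆ J) (f : ℝ → ℝ) (hf : ContinuousOn f J) (hconv : ConvexOn ℝ J f)
    (A B C D : Fin n → H →L[ℂ] H)
    (hAsa : ∀ i, IsSelfAdjoint (A i)) (hAspec : ∀ i, spectrum ℝ (A i) ⊆ J)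
    (hBsa : ∀ i, IsSelfAdjoint (B i)) (hBspec : ∀ i, spectrum ℝ (B i) ⊆ J)
    (hCsa : ∀ i, IsSelfAdjoint (C i)) (hCspec : ∀ i, spectrum ℝ (C i) ⊆ J)
    (hDsa : ∀ i, IsSelfAdjoint (D i)) (hDspec : ∀ i, spectrum ℝ (D i) ⊆ J)
    (hA : ∀ i, A i ≤ m • 1) (hBl : ∀ i, m • 1 ≤ B i) (hBu : ∀ i, B i ≤ M • 1)
    (hCl : ∀ i, m • 1 ≤ C i) (hCu : ∀ i, C i ≤ M • 1) (hD : ∀ i, M • 1 ≤ D i)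
    (hsum : ∑ i, (A i + D i) = ∑ i, (C i + B i)) :
    ∑ i, cfc f (C i) + ∑ i, cfc f (B i) ≤
        ∑ i, cfc f (A i) + ∑ i, cfc f (D i) -
          (f m + f M - 2 * f ((m + M) / 2)) •
            ∑ i,
              (((1 / 2 : ℝ) • (1 : H →L[ℂ] H) -
                  (M - m)⁻¹ • opAbs (C i - ((m + M) / 2) • 1)) +
                ((1 / 2 : ℝ) • (1 : H →L[ℂ] H) -
                  (M - m)⁻¹ • opAbs (B i - ((m + M) / 2) • 1))) ∧
      ∑ i, cfc f (A i) + ∑ i, cfc f (D i) -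
          (f m + f M - 2 * f ((m + M) / 2)) •
            ∑ i,
              (((1 / 2 : ℝ) • (1 : H →L[ℂ] H) -
                  (M - m)⁻¹ • opAbs (C i - ((m + M) / 2) • 1)) +
                ((1 / 2 : ℝ) • (1 : H →L[ℂ] H) -
                  (M - m)⁻¹ • opAbs (B i - ((m + M) / 2) • 1))) ≤
        ∑ i, cfc f (A i) + ∑ i, cfc f (D i) := by
  have hmm : (0:ℝ) < M - m := by linarith
  set c : ℝ := (m + M) / 2 with hc_def
  set δ : ℝ := f m + f M - 2 * f c with hδ_def
  set α : ℝ := (f M - f m) / (M - m) with hα_def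
  set β : ℝ := f m - α * m with hβ_def
  set g : ℝ → ℝ := fun t => (1/2 : ℝ) - (M - m)⁻¹ * |t - c| with hg_def
  have hδ0 : 0 ≤ δ := delta_nonneg hmM hJmM hconv
  -- spectrum inclusions
  have hspec_le : ∀ (a : H →L[ℂ] H), IsSelfAdjoint a → a ≤ M • 1 →
      ∀ x ∈ spectrum ℝ a, x ≤ M := by
    intro a ha h
    rw [← le_algebraMap_iff_spectrum_le (R := ℝ) ha, Algebra.algebraMap_eq_smul_one]
    exact h
  have hle_spec : ∀ (a : H →L[ℂ] H), IsSelfAdjoint a → m • 1 ≤ a →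
      ∀ x ∈ spectrum ℝ a, m ≤ x := by
    intro a ha h
    rw [← algebraMap_le_iff_le_spectrum (R := ℝ) ha, Algebra.algebraMap_eq_smul_one]
    exact h
  have hspec_le' : ∀ (a : H →L[ℂ] H), IsSelfAdjoint a → a ≤ m • 1 →
      ∀ x ∈ spectrum ℝ a, x ≤ m := by
    intro a ha h
    rw [← le_algebraMap_iff_spectrum_le (R := ℝ) ha, Algebra.algebraMap_eq_smul_one]
    exact h
  have hle_spec' : ∀ (a : H →L[ℂ] H), IsSelfAdjoint a → M • 1 ≤ a →
      ∀ x ∈ spectrum ℝ a, M ≤ x := by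
    intro a ha h
    rw [← algebraMap_le_iff_le_spectrum (R := ℝ) ha, Algebra.algebraMap_eq_smul_one]
    exact h
  -- the middle (termwise) operator inequality and positivity, for `B i` and `C i`
  have hmid : ∀ (a : H →L[ℂ] H), IsSelfAdjoint a → spectrum ℝ a ⊆ J →
      m • 1 ≤ a → a ≤ M • 1 →
      (cfc f a + δ • ((1/2 : ℝ) • (1 : H →L[ℂ] H) - (M - m)⁻¹ • opAbs (a - c • 1)) ≤
          α • a + β • 1) ∧
        0 ≤ δ • ((1/2 : ℝ) • (1 : H →L[ℂ] H) - (M - m)⁻¹ • opAbs (a - c • 1)) := by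
    intro a ha haJ h1 h2
    have hsI : spectrum ℝ a ⊆ Set.Icc m M := fun x hx =>
      ⟨hle_spec a ha h1 x hx, hspec_le a ha h2 x hx⟩
    have hfa : ContinuousOn f (spectrum ℝ a) := hf.mono haJ
    have hbr : (1/2 : ℝ) • (1 : H →L[ℂ] H) - (M - m)⁻¹ • opAbs (a - c • 1) = cfc g a :=
      bracket_eq a ha c (M - m)⁻¹
    have hδbr : δ • ((1/2 : ℝ) • (1 : H →L[ℂ] H) - (M - m)⁻¹ • opAbs (a - c • 1)) =
        cfc (fun t => δ * g t) a := by
      rw [hbr, ← cfc_const_mul δ g a (by rw [hg_def]; fun_prop)]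
    constructor
    · rw [hδbr, ← cfc_add a f (fun t => δ * g t) hfa (by rw [hg_def]; fun_prop)]
      calc cfc (fun t => f t + δ * g t) a ≤ cfc (fun t : ℝ => α * t + β) a := by
            apply cfc_mono (fun x hx => ?_)
              (hfa.add (by rw [hg_def]; fun_prop)) (by fun_prop)
            show f x + (f m + f M - 2 * f ((m + M) / 2)) *
                ((1/2 : ℝ) - (M - m)⁻¹ * |x - (m + M) / 2|) ≤
              (f M - f m) / (M - m) * x + (f m - (f M - f m) / (M - m) * m)
            exact key_mid hmM hJmM hconv (hsI hx)
          _ = α • a + β • 1 := cfc_affine a ha α β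
    · rw [hδbr]
      apply cfc_nonneg
      intro x hx
      exact mul_nonneg hδ0 (g_nonneg hmM (hsI hx))
  -- the outer operator inequality for `A i` and `D i`
  have houtA : ∀ i, α • A i + β • 1 ≤ cfc f (A i) := by
    intro i
    have : cfc (fun t : ℝ => α * t + β) (A i) ≤ cfc f (A i) := by
      apply cfc_mono (fun x hx => ?_) (by fun_prop) (hf.mono (hAspec i))
      have hxm : x ≤ m := hspec_le' (A i) (hAsa i) (hA i) x hx
      show (f M - f m) / (M - m) * x + (f m - (f M - f m) / (M - m) * m) ≤ f x
      exact key_left hmM hJmM hconv (hAspec i hx) hxm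
    rw [cfc_affine (A i) (hAsa i) α β] at this
    exact this
  have houtD : ∀ i, α • D i + β • 1 ≤ cfc f (D i) := by
    intro i
    have : cfc (fun t : ℝ => α * t + β) (D i) ≤ cfc f (D i) := by
      apply cfc_mono (fun x hx => ?_) (by fun_prop) (hf.mono (hDspec i))
      have hxM : M ≤ x := hle_spec' (D i) (hDsa i) (hD i) x hx
      show (f M - f m) / (M - m) * x + (f m - (f M - f m) / (M - m) * m) ≤ f x
      exact key_right hmM hJmM hconv (hDspec i hx) hxM
    rw [cfc_affine (D i) (hDsa i) α β] at this
    exact this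
  set brC : Fin n → H →L[ℂ] H := fun i =>
    (1/2 : ℝ) • (1 : H →L[ℂ] H) - (M - m)⁻¹ • opAbs (C i - c • 1) with hbrC_def
  set brB : Fin n → H →L[ℂ] H := fun i =>
    (1/2 : ℝ) • (1 : H →L[ℂ] H) - (M - m)⁻¹ • opAbs (B i - c • 1) with hbrB_def
  have hP0 : 0 ≤ δ • ∑ i, (brC i + brB i) := by
    rw [Finset.smul_sum]
    apply Finset.sum_nonneg
    intro i _
    rw [smul_add]
    have h1 := (hmid (C i) (hCsa i) (hCspec i) (hCl i) (hCu i)).2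
    have h2 := (hmid (B i) (hBsa i) (hBspec i) (hBl i) (hBu i)).2
    exact add_nonneg h1 h2
  constructor
  · rw [le_sub_iff_add_le]
    have h1 : ∑ i, cfc f (C i) + ∑ i, cfc f (B i) + δ • ∑ i, (brC i + brB i) =
        ∑ i, ((cfc f (C i) + δ • brC i) + (cfc f (B i) + δ • brB i)) := by
      rw [Finset.smul_sum]
      rw [← Finset.sum_add_distrib, ← Finset.sum_add_distrib]
      congr 1
      ext i
      rw [smul_add]
      abel
    rw [h1]
    calc ∑ i, ((cfc f (C i) + δ • brC i) + (cfc f (B i) + δ • brB i))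
        ≤ ∑ i, (α • (C i + B i) + (2 * β) • 1) := by
          apply Finset.sum_le_sum
          intro i _
          have h1 := (hmid (C i) (hCsa i) (hCspec i) (hCl i) (hCu i)).1
          have h2 := (hmid (B i) (hBsa i) (hBspec i) (hBl i) (hBu i)).1
          calc cfc f (C i) + δ • brC i + (cfc f (B i) + δ • brB i)
              ≤ (α • C i + β • 1) + (α • B i + β • 1) := add_le_add h1 h2
            _ = α • (C i + B i) + (2 * β) • 1 := by
                rw [smul_add, two_mul, add_smul]; abel
      _ = ∑ i, (α • (A i + D i) + (2 * β) • 1) := by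
          have h2 : ∑ i, α • (C i + B i) = ∑ i, α • (A i + D i) := by
            rw [← Finset.smul_sum, ← Finset.smul_sum]
            exact congrArg (fun s => α • s) hsum.symm
          rw [Finset.sum_add_distrib, Finset.sum_add_distrib, h2]
      _ ≤ ∑ i, (cfc f (A i) + cfc f (D i)) := by
          apply Finset.sum_le_sum
          intro i _
          have : α • (A i + D i) + (2 * β) • 1 = (α • A i + β • 1) + (α • D i + β • 1) := by
            rw [smul_add, two_mul, add_smul]; abel
          rw [this]
          exact add_le_add (houtA i) (houtD i)
      _ = ∑ i, cfc f (A i) + ∑ i, cfc f (D i) := Finset.sum_add_distrib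
  · exact sub_le_self _ hP0
end
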